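/- arXiv:1908.01433 — 2 statements merged into one kernel-verified Lean document; each statement's English description precedes it below -/
import Mathlib

section
/- Let r ≥ 2 be an even integer, let k ≥ r be an integer and p ≥ r be a real number. If G is a complete regular k-partite r-graph (unweighted), then λ^(p)(G) / λ_min^(p)(G) = λ^(p)(K_k^r) / λ_min^(p)(K_k^r). -/
open Finset

/-- Polynomial form of a weighted `r`-graph with edge set `E` and weights `w`:
`P(x) = r! * ∑_{e ∈ E} w(e) * ∏_{i ∈ e} x i`. -/
noncomputable def polyForm (r : ℕ) {V : Type*} (E : Finset (Finset V))
    (w : Finset V → ℝ) (x : V → ℝ) : ℝ :=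
  (r.factorial : ℝ) * ∑ e ∈ E, w e * ∏ i ∈ e, x i

/-- The ℓ^p norm of a vector. -/
noncomputable def lpNorm (p : ℝ) {V : Type*} [Fintype V] (x : V → ℝ) : ℝ :=
  (∑ i, |x i| ^ p) ^ (1 / p)

/-- `λ^(p)(G_w)`: the maximum of the polynomial form over the unit ℓ^p sphere. -/
noncomputable def lamMax (r : ℕ) (p : ℝ) {V : Type*} [Fintype V]
    (E : Finset (Finset V)) (w : Finset V → ℝ) : ℝ :=
  sSup {t | ∃ x : V → ℝ, lpNorm p x = 1 ∧ polyForm r E w x = t}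

/-- `λ_min^(p)(G_w)`: the minimum of the polynomial form over the unit ℓ^p sphere. -/
noncomputable def lamMin (r : ℕ) (p : ℝ) {V : Type*} [Fintype V]
    (E : Finset (Finset V)) (w : Finset V → ℝ) : ℝ :=
  sInf {t | ∃ x : V → ℝ, lpNorm p x = 1 ∧ polyForm r E w x = t}

/-- Edge set of the complete `r`-graph `K_k^r` on vertex set `Fin k`. -/
def completeEdges (r k : ℕ) : Finset (Finset (Fin k)) :=
  Finset.univ.powersetCard r

/-- Edge set of the complete regular `k`-partite `r`-graph with parts of size `t`:
vertices are `Fin k × Fin t` (the parts are the fibers of `Prod.fst`), and edges are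
all `r`-element vertex sets containing at most one vertex from each part. -/
def multiEdges (r k t : ℕ) : Finset (Finset (Fin k × Fin t)) :=
  (Finset.univ.powersetCard r).filter (fun e => (e.image Prod.fst).card = r)

/-!
Every edge of the blow-up `G` picks one vertex from each of `r` distinct parts, so summing the
coordinates of `y` over each part gives `P_G(y) = P_{K_k^r}(z)` with `z_i = ∑_j y_(i,j)`. The power
mean inequality gives `|z|_p ≤ t^(1-1/p) |y|_p`, with equality when `y` is constant on parts.
Since `P` is `r`-homogeneous and `λ_min ≤ 0 ≤ λ` (a unit vector supported on one vertex has
value `0`), both extremes of `P_G` are those of `P_{K_k^r}` times `t^(r(1-1/p))`, which cancels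
in the ratio.
-/

section LpNorm
variable {V : Type*} [Fintype V] {p : ℝ}

lemma fact_one_le_ofReal (hp : 1 ≤ p) : Fact (1 ≤ ENNReal.ofReal p) := ⟨by simpa using hp⟩

lemma lpNorm_eq_norm_toLp (hp : 1 ≤ p) (x : V → ℝ) :
    lpNorm p x = ‖WithLp.toLp (ENNReal.ofReal p) x‖ := by
  have hp' : (ENNReal.ofReal p).toReal = p := ENNReal.toReal_ofReal (by linarith)
  rw [PiLp.norm_eq_sum (by rw [hp']; linarith), hp']
  rfl

lemma lpNorm_nonneg (hp : 1 ≤ p) (x : V → ℝ) : 0 ≤ lpNorm p x := by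
  have := fact_one_le_ofReal hp
  rw [lpNorm_eq_norm_toLp hp]
  exact norm_nonneg _

lemma lpNorm_eq_zero (hp : 1 ≤ p) {x : V → ℝ} : lpNorm p x = 0 ↔ x = 0 := by
  have := fact_one_le_ofReal hp
  rw [lpNorm_eq_norm_toLp hp, norm_eq_zero, WithLp.toLp_eq_zero]

lemma lpNorm_smul (hp : 1 ≤ p) (c : ℝ) (x : V → ℝ) :
    lpNorm p (c • x) = |c| * lpNorm p x := by
  have := fact_one_le_ofReal hp
  rw [lpNorm_eq_norm_toLp hp, lpNorm_eq_norm_toLp hp, WithLp.toLp_smul, norm_smul,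
    Real.norm_eq_abs]

lemma lpNorm_single [DecidableEq V] (hp : 1 ≤ p) (v : V) : lpNorm p (Pi.single v 1) = 1 := by
  have := fact_one_le_ofReal hp
  rw [lpNorm_eq_norm_toLp hp, PiLp.toLp_single, PiLp.norm_single, norm_one]

lemma isCompact_lpNorm_eq_one (hp : 1 ≤ p) : IsCompact {x : V → ℝ | lpNorm p x = 1} := by
  have := fact_one_le_ofReal hp
  have hS : {x : V → ℝ | lpNorm p x = 1} =
      (PiLp.homeomorph (ENNReal.ofReal p) fun _ : V => ℝ).symm ⁻¹' Metric.sphere 0 1 := by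
    ext x
    simp only [Set.mem_ofPred_eq, Set.mem_preimage, mem_sphere_zero_iff_norm,
      lpNorm_eq_norm_toLp hp]
    rfl
  rw [hS, Homeomorph.isCompact_preimage]
  exact isCompact_sphere 0 1

end LpNorm

lemma prod_sum_eq_sum_sections {α β R : Type*} [Fintype α] [Fintype β] [DecidableEq α]
    [DecidableEq β] [CommSemiring R] (f : Finset α) (y : α × β → R) :
    ∏ i ∈ f, ∑ j, y (i, j) =
      ∑ e with e.image Prod.fst = f ∧ e.card = f.card, ∏ v ∈ e, y v := by
  rw [← Finset.prod_coe_sort f, Fintype.prod_sum]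
  have graph_inj (g : f → β) : Function.Injective fun i : f => ((i : α), g i) :=
    fun i i' h => Subtype.ext (congrArg Prod.fst h)
  refine Finset.sum_bij (fun g _ => univ.image fun i : f => ((i : α), g i)) ?_ ?_ ?_ ?_
  · intro g _
    simp [image_image, Function.comp_def, card_image_of_injective _ (graph_inj g)]
  · intro g _ g' _ h
    funext i
    have : ((i : α), g i) ∈ univ.image fun i : f => ((i : α), g' i) :=
      h ▸ mem_image_of_mem _ (mem_univ i)
    obtain ⟨i', -, hi'⟩ := mem_image.mp this
    obtain rfl : i' = i := Subtype.ext (congrArg Prod.fst hi')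
    exact (congrArg Prod.snd hi').symm
  · intro e he
    simp only [mem_filter, mem_univ, true_and] at he
    have hfib (i : f) : ∃ j, ((i : α), j) ∈ e := by
      obtain ⟨v, hv, hvi⟩ := mem_image.mp (he.1.symm ▸ i.2 : (i : α) ∈ e.image Prod.fst)
      exact ⟨v.2, hvi ▸ hv⟩
    choose g hg using hfib
    refine ⟨g, mem_univ _, eq_of_subset_of_card_le ?_ ?_⟩
    · intro v hv
      obtain ⟨i, -, rfl⟩ := mem_image.mp hv
      exact hg i
    · rw [card_image_of_injective _ (graph_inj g), he.2, card_univ, Fintype.card_coe]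
  · intro g _
    rw [prod_image fun i _ i' _ h => graph_inj g h]

section PolyForm
variable {V : Type*} {r : ℕ} {E : Finset (Finset V)} {w : Finset V → ℝ}

lemma continuous_polyForm : Continuous (polyForm r E w) := by
  unfold polyForm
  fun_prop

lemma polyForm_smul (hE : ∀ e ∈ E, e.card = r) (c : ℝ) (x : V → ℝ) :
    polyForm r E w (c • x) = c ^ r * polyForm r E w x := by
  simp only [polyForm, Pi.smul_apply, smul_eq_mul, prod_mul_distrib, prod_const, mul_sum]
  refine sum_congr rfl fun e he => ?_
  rw [hE e he]
  ring

lemma polyForm_single_eq_zero [DecidableEq V] (hE : ∀ e ∈ E, 2 ≤ e.card) (v : V) :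
    polyForm r E w (Pi.single v 1) = 0 := by
  refine mul_eq_zero_of_right _ (sum_eq_zero fun e he => mul_eq_zero_of_right _ ?_)
  obtain ⟨u, hu, huv⟩ := exists_mem_ne (hE e he) v
  exact prod_eq_zero hu (Pi.single_eq_of_ne huv 1)

variable [Fintype V] {p : ℝ}

lemma isGreatest_lamMax [Nonempty V] (hp : 1 ≤ p) :
    IsGreatest (polyForm r E w '' {x | lpNorm p x = 1}) (lamMax r p E w) := by
  classical
  obtain ⟨v⟩ := ‹Nonempty V›
  exact ((isCompact_lpNorm_eq_one hp).image continuous_polyForm).isGreatest_sSup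
    ⟨_, Pi.single v 1, lpNorm_single hp v, rfl⟩

lemma isLeast_lamMin [Nonempty V] (hp : 1 ≤ p) :
    IsLeast (polyForm r E w '' {x | lpNorm p x = 1}) (lamMin r p E w) := by
  classical
  obtain ⟨v⟩ := ‹Nonempty V›
  exact ((isCompact_lpNorm_eq_one hp).image continuous_polyForm).isLeast_sInf
    ⟨_, Pi.single v 1, lpNorm_single hp v, rfl⟩

lemma zero_mem_polyForm_image_sphere [Nonempty V] (hp : 1 ≤ p) (hE : ∀ e ∈ E, 2 ≤ e.card) :
    (0 : ℝ) ∈ polyForm r E w '' {x | lpNorm p x = 1} := by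
  classical
  obtain ⟨v⟩ := ‹Nonempty V›
  exact ⟨Pi.single v 1, lpNorm_single hp v, polyForm_single_eq_zero hE v⟩

lemma polyForm_mem_Icc (hp : 1 ≤ p) (hE : ∀ e ∈ E, e.card = r) (hr : r ≠ 0) (x : V → ℝ) :
    polyForm r E w x ∈
      Set.Icc (lpNorm p x ^ r * lamMin r p E w) (lpNorm p x ^ r * lamMax r p E w) := by
  rcases eq_or_ne x 0 with rfl | hx
  · have hP : polyForm r E w 0 = 0 := by
      simpa [zero_pow hr] using polyForm_smul (w := w) hE 0 0
    simp [hP, (lpNorm_eq_zero hp).2 rfl, zero_pow hr]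
  obtain ⟨v, -⟩ := Function.ne_iff.mp hx
  have : Nonempty V := ⟨v⟩
  set s := lpNorm p x
  have hs : 0 < s := (lpNorm_nonneg hp x).lt_of_ne' (mt (lpNorm_eq_zero hp).1 hx)
  have hu : lpNorm p (s⁻¹ • x) = 1 := by
    rw [lpNorm_smul hp, abs_of_pos (inv_pos.2 hs), inv_mul_cancel₀ hs.ne']
  have hx_eq : polyForm r E w x = s ^ r * polyForm r E w (s⁻¹ • x) := by
    rw [← polyForm_smul hE, smul_inv_smul₀ hs.ne']
  have hmem : polyForm r E w (s⁻¹ • x) ∈ polyForm r E w '' {x | lpNorm p x = 1} := ⟨_, hu, rfl⟩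
  rw [hx_eq]
  exact ⟨mul_le_mul_of_nonneg_left ((isLeast_lamMin hp).2 hmem) (by positivity),
    mul_le_mul_of_nonneg_left ((isGreatest_lamMax hp).2 hmem) (by positivity)⟩

end PolyForm

section Fibers
variable {α β : Type*} [Fintype α] [Fintype β] {p : ℝ}

lemma lpNorm_comp_fst (x : α → ℝ) :
    lpNorm p (fun v : α × β => x v.1) = (Fintype.card β : ℝ) ^ (1 / p) * lpNorm p x := by
  have hsum : ∑ v : α × β, |x v.1| ^ p = Fintype.card β * ∑ i, |x i| ^ p := by
    simp [Fintype.sum_prod_type, mul_sum]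
  rw [lpNorm, lpNorm, hsum, Real.mul_rpow (by positivity) (by positivity)]

lemma lpNorm_sum_fiber_le (hp : 1 ≤ p) (y : α × β → ℝ) :
    lpNorm p (fun i => ∑ j, y (i, j)) ≤ (Fintype.card β : ℝ) ^ (1 - 1 / p) * lpNorm p y := by
  have hfiber (i : α) :
      |∑ j, y (i, j)| ^ p ≤ (Fintype.card β : ℝ) ^ (p - 1) * ∑ j, |y (i, j)| ^ p := by
    calc |∑ j, y (i, j)| ^ p ≤ (∑ j, |y (i, j)|) ^ p := by
          gcongr
          exact abs_sum_le_sum_abs _ _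
      _ ≤ _ := by simpa using Real.rpow_sum_le_const_mul_sum_rpow univ (fun j => y (i, j)) hp
  have hsum : ∑ i, |∑ j, y (i, j)| ^ p ≤ (Fintype.card β : ℝ) ^ (p - 1) * ∑ v, |y v| ^ p := by
    rw [Fintype.sum_prod_type, mul_sum]
    exact sum_le_sum fun i _ => hfiber i
  calc lpNorm p (fun i => ∑ j, y (i, j))
      ≤ ((Fintype.card β : ℝ) ^ (p - 1) * ∑ v, |y v| ^ p) ^ (1 / p) := by
        unfold lpNorm
        gcongr
    _ = (Fintype.card β : ℝ) ^ (1 - 1 / p) * lpNorm p y := by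
        rw [lpNorm, Real.mul_rpow (by positivity) (by positivity), ← Real.rpow_mul (by positivity)]
        congr 2
        field_simp

end Fibers

lemma mem_completeEdges {r k : ℕ} {f : Finset (Fin k)} : f ∈ completeEdges r k ↔ f.card = r := by
  simp [completeEdges]

lemma polyForm_multiEdges (r k t : ℕ) (y : Fin k × Fin t → ℝ) :
    polyForm r (multiEdges r k t) (fun _ => 1) y =
      polyForm r (completeEdges r k) (fun _ => 1) (fun i => ∑ j, y (i, j)) := by
  simp only [polyForm, one_mul]
  congr 1
  rw [← sum_fiberwise_of_maps_to (s := multiEdges r k t) (t := completeEdges r k)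
    (g := image Prod.fst) fun e he => mem_completeEdges.2 (mem_filter.1 he).2]
  refine sum_congr rfl fun f hf => ?_
  have hfr := mem_completeEdges.1 hf
  rw [prod_sum_eq_sum_sections]
  congr 1
  ext e
  simp only [multiEdges, mem_filter, mem_powersetCard, subset_univ, true_and, mem_univ]
  constructor
  · rintro ⟨⟨he, -⟩, hef⟩; exact ⟨hef, he.trans hfr.symm⟩
  · rintro ⟨hef, he⟩; exact ⟨⟨he.trans hfr, hef ▸ hfr⟩, hef⟩

section Blowup
variable {r k t : ℕ} {p : ℝ}

lemma polyForm_multiEdges_mem_Icc (hr : 2 ≤ r) (hkr : r ≤ k) (hp : 1 ≤ p)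
    {y : Fin k × Fin t → ℝ} (hy : lpNorm p y = 1) :
    polyForm r (multiEdges r k t) (fun _ => 1) y ∈
      Set.Icc (((t : ℝ) ^ (1 - 1 / p)) ^ r * lamMin r p (completeEdges r k) (fun _ => 1))
        (((t : ℝ) ^ (1 - 1 / p)) ^ r * lamMax r p (completeEdges r k) (fun _ => 1)) := by
  have : Nonempty (Fin k) := ⟨⟨0, by omega⟩⟩
  have hK : ∀ e ∈ completeEdges r k, e.card = r := fun e => mem_completeEdges.1
  have h0 := zero_mem_polyForm_image_sphere (r := r) (w := fun _ => 1) hp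
    fun e he => (hK e he).symm ▸ hr
  have hmin := (isLeast_lamMin hp).2 h0
  have hmax := (isGreatest_lamMax hp).2 h0
  set z : Fin k → ℝ := fun i => ∑ j, y (i, j)
  have hz : lpNorm p z ^ r ≤ ((t : ℝ) ^ (1 - 1 / p)) ^ r := by
    refine pow_le_pow_left₀ (lpNorm_nonneg hp z) ?_ r
    simpa [hy] using lpNorm_sum_fiber_le hp y
  obtain ⟨hlow, hhigh⟩ := polyForm_mem_Icc (w := fun _ => 1) hp hK (by omega) z
  rw [polyForm_multiEdges]
  exact ⟨(mul_le_mul_of_nonpos_right hz hmin).trans hlow,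
    hhigh.trans (mul_le_mul_of_nonneg_right hz hmax)⟩

lemma exists_polyForm_multiEdges_eq (ht : 0 < t) (hp : 1 ≤ p) {x : Fin k → ℝ}
    (hx : lpNorm p x = 1) :
    ∃ y : Fin k × Fin t → ℝ, lpNorm p y = 1 ∧ polyForm r (multiEdges r k t) (fun _ => 1) y =
      ((t : ℝ) ^ (1 - 1 / p)) ^ r * polyForm r (completeEdges r k) (fun _ => 1) x := by
  have ht' : (0 : ℝ) < t := by exact_mod_cast ht
  set s := (t : ℝ) ^ (1 / p)
  have hs : 0 < s := by positivity
  refine ⟨s⁻¹ • fun v => x v.1, ?_, ?_⟩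
  · rw [lpNorm_smul hp, lpNorm_comp_fst, Fintype.card_fin, hx, abs_of_pos (inv_pos.2 hs),
      mul_one, inv_mul_cancel₀ hs.ne']
  · have hz : (fun i => ∑ j : Fin t, (s⁻¹ • fun v : Fin k × Fin t => x v.1) (i, j)) =
        (t : ℝ) ^ (1 - 1 / p) • x := by
      ext i
      simp only [one_div, Pi.smul_apply, smul_eq_mul, sum_const, card_univ, Fintype.card_fin,
        nsmul_eq_mul, Real.rpow_sub ht', Real.rpow_one, s]
      field_simp
    rw [polyForm_multiEdges, hz, polyForm_smul fun e => mem_completeEdges.1]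

lemma lamMax_multiEdges (hr : 2 ≤ r) (hkr : r ≤ k) (ht : 0 < t) (hp : 1 ≤ p) :
    lamMax r p (multiEdges r k t) (fun _ => 1) =
      ((t : ℝ) ^ (1 - 1 / p)) ^ r * lamMax r p (completeEdges r k) (fun _ => 1) := by
  have : Nonempty (Fin k) := ⟨⟨0, by omega⟩⟩
  obtain ⟨⟨x, hx, hPx⟩, -⟩ := isGreatest_lamMax (r := r) (E := completeEdges r k)
    (w := fun _ => 1) hp
  obtain ⟨y, hy, hPy⟩ := exists_polyForm_multiEdges_eq ht hp hx
  refine IsGreatest.csSup_eq ⟨⟨y, hy, hPy.trans (by rw [hPx])⟩, ?_⟩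
  rintro _ ⟨y, hy, rfl⟩
  exact (polyForm_multiEdges_mem_Icc hr hkr hp hy).2

lemma lamMin_multiEdges (hr : 2 ≤ r) (hkr : r ≤ k) (ht : 0 < t) (hp : 1 ≤ p) :
    lamMin r p (multiEdges r k t) (fun _ => 1) =
      ((t : ℝ) ^ (1 - 1 / p)) ^ r * lamMin r p (completeEdges r k) (fun _ => 1) := by
  have : Nonempty (Fin k) := ⟨⟨0, by omega⟩⟩
  obtain ⟨⟨x, hx, hPx⟩, -⟩ := isLeast_lamMin (r := r) (E := completeEdges r k)
    (w := fun _ => 1) hp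
  obtain ⟨y, hy, hPy⟩ := exists_polyForm_multiEdges_eq ht hp hx
  refine IsLeast.csInf_eq ⟨⟨y, hy, hPy.trans (by rw [hPx])⟩, ?_⟩
  rintro _ ⟨y, hy, rfl⟩
  exact (polyForm_multiEdges_mem_Icc hr hkr hp hy).1

end Blowup

theorem hoffman_hypergraph_equality_general (r k t : ℕ) (p : ℝ)
    (hr2 : 2 ≤ r) (hkr : r ≤ k) (hp : (r : ℝ) ≤ p) (ht : 1 ≤ t) :
    lamMax r p (multiEdges r k t) (fun _ => 1) /
        lamMin r p (multiEdges r k t) (fun _ => 1) =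
      lamMax r p (completeEdges r k) (fun _ => 1) /
        lamMin r p (completeEdges r k) (fun _ => 1) := by
  have hp1 : 1 ≤ p := le_trans (by exact_mod_cast hr2.trans' one_le_two) hp
  have hC : ((t : ℝ) ^ (1 - 1 / p)) ^ r ≠ 0 := by positivity
  rw [lamMax_multiEdges hr2 hkr ht hp1, lamMin_multiEdges hr2 hkr ht hp1, mul_div_mul_left _ _ hC]

/-- **Theorem 1 (equality part).** Let `r ≥ 2` be even, `k ≥ r`, and `p ≥ r`.
If `G` is the complete regular `k`-partite `r`-graph (parts of size `t ≥ 1`), then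
`λ^(p)(G)/λ_min^(p)(G) = λ^(p)(K_k^r)/λ_min^(p)(K_k^r)`. -/
theorem hoffman_hypergraph_equality (r k t : ℕ) (p : ℝ)
    (hr2 : 2 ≤ r) (hre : Even r) (hkr : r ≤ k) (hp : (r : ℝ) ≤ p) (ht : 1 ≤ t) :
    lamMax r p (multiEdges r k t) (fun _ => 1) /
        lamMin r p (multiEdges r k t) (fun _ => 1) =
      lamMax r p (completeEdges r k) (fun _ => 1) /
        lamMin r p (completeEdges r k) (fun _ => 1) :=
  hoffman_hypergraph_equality_general r k t p hr2 hkr hp ht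
end

section
/- Let n ≥ 2 be an even integer, and let G be the 4-graph on 2n vertices whose vertex set is the disjoint union of sets A and B with |A| = |B| = n, and whose edges are all 4-element vertex sets intersecting A in exactly two vertices. Then for every real p ≥ 2, λ^(p)(G) = 4! · C(n,2)^2 / (2n)^{4/p}, where C(n,2) = n(n−1)/2. -/
open Finset

/-- The `4`-graph of Section 2 of the paper: the vertex set is the disjoint union
`A ⊕ B` of two sets of size `n` (`A` = left copy of `Fin n`, `B` = right copy), and
the edges are all `4`-element vertex sets intersecting `A` in exactly two vertices. -/
def crossEdges (n : ℕ) : Finset (Finset (Fin n ⊕ Fin n)) :=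
  (Finset.univ.powersetCard 4).filter
    (fun e => (e.filter (fun v => v.isLeft = true)).card = 2)

/-!
The edge sum factors as `e₂(x_A) · e₂(x_B)`, the second elementary symmetric polynomials of
the two halves of `x`. For nonnegative `y` on `n` coordinates, Cauchy–Schwarz gives
`e₂(y) ≤ C(n,2) · (mean y)²`, and the power-mean inequality bounds the mean by the `p`-th power
mean. Taking absolute values and writing `a + b = 1` for the `p`-th power sums of `|x|` on the
two halves, `P(x) ≤ 24 C(n,2)² (ab/n²)^{2/p} ≤ 24 C(n,2)² (2n)^{-4/p}` because `ab ≤ 1/4`.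
The constant vector `(2n)^{-1/p}` attains the bound.
-/

noncomputable def esymm2 {ι : Type*} (s : Finset ι) (y : ι → ℝ) : ℝ :=
  ∑ t ∈ s.powersetCard 2, ∏ i ∈ t, y i

section esymm2

variable {ι : Type*}

@[simp]
theorem esymm2_empty (y : ι → ℝ) : esymm2 ∅ y = 0 := by
  rw [esymm2, powersetCard_eq_empty.2 (by simp), sum_empty]

theorem esymm2_nonneg {s : Finset ι} {y : ι → ℝ} (hy : ∀ i ∈ s, 0 ≤ y i) : 0 ≤ esymm2 s y :=
  sum_nonneg fun _ ht => prod_nonneg fun i hi => hy i ((mem_powersetCard.1 ht).1 hi)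

theorem esymm2_const (s : Finset ι) (c : ℝ) :
    esymm2 s (fun _ => c) = (#s).choose 2 * c ^ 2 := by
  rw [esymm2, sum_congr rfl fun t ht => by rw [prod_const, (mem_powersetCard.1 ht).2],
    sum_const, card_powersetCard, nsmul_eq_mul]

theorem esymm2_insert [DecidableEq ι] {a : ι} {s : Finset ι} (ha : a ∉ s) (y : ι → ℝ) :
    esymm2 (insert a s) y = esymm2 s y + y a * ∑ i ∈ s, y i := by
  have hdisj : Disjoint (s.powersetCard 2) ((s.powersetCard 1).image (insert a)) := by
    simp only [disjoint_left, mem_image, not_exists, not_and]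
    rintro _ ht u _ rfl
    exact ha ((mem_powersetCard.1 ht).1 (mem_insert_self a u))
  have hinj : Set.InjOn (insert a) (s.powersetCard 1 : Set (Finset ι)) := by
    intro u hu v hv huv
    have hau : a ∉ u := fun h => ha ((mem_powersetCard.1 hu).1 h)
    have hav : a ∉ v := fun h => ha ((mem_powersetCard.1 hv).1 h)
    rw [← erase_insert hau, huv, erase_insert hav]
  rw [esymm2, esymm2, powersetCard_succ_insert ha, sum_union hdisj, sum_image hinj,
    powersetCard_one, sum_map, mul_sum]
  congr 1
  refine sum_congr rfl fun i hi => ?_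
  have hai : a ∉ ({i} : Finset ι) := by
    rw [mem_singleton]
    rintro rfl
    exact ha hi
  simp [prod_insert hai]

theorem two_mul_esymm2 (s : Finset ι) (y : ι → ℝ) :
    2 * esymm2 s y = (∑ i ∈ s, y i) ^ 2 - ∑ i ∈ s, y i ^ 2 := by
  classical
  induction s using Finset.induction with
  | empty => simp
  | insert a s ha ih =>
    rw [esymm2_insert ha, sum_insert ha, sum_insert ha]
    linear_combination ih

theorem esymm2_le_choose_mul_sq_mean (s : Finset ι) (y : ι → ℝ) :
    esymm2 s y ≤ (#s).choose 2 * ((∑ i ∈ s, y i) / #s) ^ 2 := by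
  have hcs := sq_sum_le_card_mul_sum_sq (s := s) (f := y)
  have hid := two_mul_esymm2 s y
  rw [Nat.cast_choose_two]
  rcases s.eq_empty_or_nonempty with rfl | hs
  · simp
  have hn : (0 : ℝ) < #s := by exact_mod_cast hs.card_pos
  refine le_of_mul_le_mul_left ?_ hn
  have hrhs : (#s : ℝ) * (#s * (#s - 1) / 2 * ((∑ i ∈ s, y i) / #s) ^ 2)
      = (#s - 1) / 2 * (∑ i ∈ s, y i) ^ 2 := by
    field_simp
  rw [hrhs]
  linear_combination (#s / 2 : ℝ) * hid + (1 / 2 : ℝ) * hcs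

theorem mean_le_rpow_mean {s : Finset ι} (hs : s.Nonempty) {y : ι → ℝ}
    (hy : ∀ i ∈ s, 0 ≤ y i) {p : ℝ} (hp : 1 ≤ p) :
    (∑ i ∈ s, y i) / #s ≤ ((∑ i ∈ s, y i ^ p) / #s) ^ (1 / p) := by
  have hn : (#s : ℝ) ≠ 0 := by exact_mod_cast hs.card_pos.ne'
  have hw : ∑ _i ∈ s, (#s : ℝ)⁻¹ = 1 := by rw [sum_const, nsmul_eq_mul, mul_inv_cancel₀ hn]
  have h := Real.arith_mean_le_rpow_mean s (fun _ => (#s : ℝ)⁻¹) y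
    (fun _ _ => by positivity) hw hy hp
  simpa only [← mul_sum, inv_mul_eq_div, sum_div] using h

theorem esymm2_le_choose_mul_rpow_mean {s : Finset ι} (hs : s.Nonempty)
    {y : ι → ℝ} (hy : ∀ i ∈ s, 0 ≤ y i) {p : ℝ} (hp : 1 ≤ p) :
    esymm2 s y ≤ (#s).choose 2 * ((∑ i ∈ s, y i ^ p) / #s) ^ (2 / p) := by
  have hpow : 0 ≤ (∑ i ∈ s, y i ^ p) / #s :=
    div_nonneg (sum_nonneg fun i hi => Real.rpow_nonneg (hy i hi) p) (Nat.cast_nonneg _)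
  calc esymm2 s y ≤ (#s).choose 2 * ((∑ i ∈ s, y i) / #s) ^ 2 :=
        esymm2_le_choose_mul_sq_mean s y
    _ ≤ (#s).choose 2 * (((∑ i ∈ s, y i ^ p) / #s) ^ (1 / p)) ^ 2 := by
        gcongr
        · exact div_nonneg (sum_nonneg hy) (Nat.cast_nonneg _)
        · exact mean_le_rpow_mean hs hy hp
    _ = (#s).choose 2 * ((∑ i ∈ s, y i ^ p) / #s) ^ (2 / p) := by
        rw [← Real.rpow_mul_natCast hpow]
        ring_nf

end esymm2

section

variable {V : Type*}

theorem polyForm_le_polyForm_abs (r : ℕ) {E : Finset (Finset V)} {w : Finset V → ℝ}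
    (hw : ∀ e ∈ E, 0 ≤ w e) (x : V → ℝ) :
    polyForm r E w x ≤ polyForm r E w (fun i => |x i|) := by
  refine mul_le_mul_of_nonneg_left (sum_le_sum fun e he => ?_) (Nat.cast_nonneg _)
  rw [← abs_prod]
  exact mul_le_mul_of_nonneg_left (le_abs_self _) (hw e he)

theorem lpNorm_const [Fintype V] {p : ℝ} (hp : p ≠ 0) {c : ℝ} (hc : 0 ≤ c) :
    lpNorm p (fun _ : V => c) = (Fintype.card V : ℝ) ^ (1 / p) * c := by
  rw [lpNorm, sum_const, card_univ, nsmul_eq_mul, abs_of_nonneg hc,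
    Real.mul_rpow (Nat.cast_nonneg _) (Real.rpow_nonneg hc p), one_div,
    Real.rpow_rpow_inv hc hp]

theorem sum_abs_rpow_eq_one_of_lpNorm_eq_one [Fintype V] {p : ℝ} (hp : p ≠ 0) {x : V → ℝ}
    (hx : lpNorm p x = 1) : ∑ i, |x i| ^ p = 1 := by
  have hnonneg : 0 ≤ ∑ i, |x i| ^ p := sum_nonneg fun i _ => Real.rpow_nonneg (abs_nonneg _) p
  rw [lpNorm, one_div] at hx
  rw [← Real.rpow_inv_rpow hnonneg hp, hx, Real.one_rpow]

theorem lpNorm_const_eq_one [Fintype V] [Nonempty V] {p : ℝ} (hp : p ≠ 0) :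
    lpNorm p (fun _ : V => (Fintype.card V : ℝ) ^ (-1 / p)) = 1 := by
  have hV : (0 : ℝ) < Fintype.card V := by exact_mod_cast Fintype.card_pos
  rw [lpNorm_const hp (by positivity), ← Real.rpow_add hV, ← add_div, add_neg_cancel,
    zero_div, Real.rpow_zero]

end

section crossEdges

variable {n : ℕ}

theorem mem_crossEdges {e : Finset (Fin n ⊕ Fin n)} :
    e ∈ crossEdges n ↔ #e.toLeft = 2 ∧ #e.toRight = 2 := by
  have hleft : e.filter (fun v => v.isLeft = true) = e.toLeft.map .inl := by
    ext (v | v) <;> simp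
  rw [crossEdges, mem_filter, mem_powersetCard_univ, hleft, card_map,
    ← card_toLeft_add_card_toRight]
  omega

theorem sum_prod_crossEdges (x : Fin n ⊕ Fin n → ℝ) :
    ∑ e ∈ crossEdges n, ∏ i ∈ e, x i
      = esymm2 univ (fun i => x (.inl i)) * esymm2 univ (fun j => x (.inr j)) := by
  rw [esymm2, esymm2, sum_mul_sum, ← sum_product']
  refine sum_nbij' (fun e => (e.toLeft, e.toRight)) (fun st => st.1.disjSum st.2)
    ?_ ?_ (fun e _ => toLeft_disjSum_toRight) (fun st _ => by simp) ?_
  · intro e he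
    simpa [mem_powersetCard_univ] using mem_crossEdges.1 he
  · intro st hst
    simp only [mem_product, mem_powersetCard_univ] at hst
    simpa [mem_crossEdges] using hst
  · intro e _
    conv_lhs => rw [← toLeft_disjSum_toRight (u := e)]
    rw [prod_disjSum]

theorem polyForm_crossEdges (x : Fin n ⊕ Fin n → ℝ) :
    polyForm 4 (crossEdges n) (fun _ => 1) x
      = 24 * (esymm2 univ (fun i => x (.inl i)) * esymm2 univ (fun j => x (.inr j))) := by
  simp only [polyForm, one_mul, sum_prod_crossEdges]
  norm_num [Nat.factorial]

end crossEdges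

theorem polyForm_crossEdges_le {n : ℕ} (hn : 1 ≤ n) {p : ℝ} (hp : 1 ≤ p)
    {x : Fin n ⊕ Fin n → ℝ} (hx : lpNorm p x = 1) :
    polyForm 4 (crossEdges n) (fun _ => 1) x
      ≤ 24 * (n.choose 2 : ℝ) ^ 2 / (2 * n : ℝ) ^ (4 / p) := by
  have : Nonempty (Fin n) := ⟨⟨0, hn⟩⟩
  set a := ∑ i, |x (.inl i)| ^ p
  set b := ∑ j, |x (.inr j)| ^ p
  have hab : a + b = 1 := by
    have h := sum_abs_rpow_eq_one_of_lpNorm_eq_one (by positivity) hx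
    rwa [Fintype.sum_sum_type] at h
  have hA : esymm2 univ (fun i => |x (.inl i)|) ≤ n.choose 2 * (a / n) ^ (2 / p) := by
    simpa using esymm2_le_choose_mul_rpow_mean (y := fun i => |x (.inl i)|) univ_nonempty
      (fun i _ => abs_nonneg _) hp
  have hB : esymm2 univ (fun j => |x (.inr j)|) ≤ n.choose 2 * (b / n) ^ (2 / p) := by
    simpa using esymm2_le_choose_mul_rpow_mean (y := fun j => |x (.inr j)|) univ_nonempty
      (fun j _ => abs_nonneg _) hp
  have hab_le : a / n * (b / n) ≤ (1 / (2 * n)) ^ 2 := by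
    have hab4 : a * b ≤ 1 / 4 := by nlinarith [sq_nonneg (a - b)]
    calc a / n * (b / n) = a * b * (1 / n ^ 2) := by ring
      _ ≤ 1 / 4 * (1 / n ^ 2) := by gcongr
      _ = (1 / (2 * n)) ^ 2 := by ring
  calc polyForm 4 (crossEdges n) (fun _ => 1) x
      ≤ polyForm 4 (crossEdges n) (fun _ => 1) (fun v => |x v|) :=
        polyForm_le_polyForm_abs 4 (fun _ _ => zero_le_one) x
    _ = 24 * (esymm2 univ (fun i => |x (.inl i)|) * esymm2 univ (fun j => |x (.inr j)|)) :=
        polyForm_crossEdges _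
    _ ≤ 24 * ((n.choose 2 * (a / n) ^ (2 / p)) * (n.choose 2 * (b / n) ^ (2 / p))) := by
        gcongr
        exact esymm2_nonneg fun j _ => abs_nonneg _
    _ = 24 * (n.choose 2 : ℝ) ^ 2 * (a / n * (b / n)) ^ (2 / p) := by
        rw [Real.mul_rpow (by positivity) (by positivity)]
        ring
    _ ≤ 24 * (n.choose 2 : ℝ) ^ 2 * ((1 / (2 * n)) ^ 2) ^ (2 / p) := by gcongr
    _ = 24 * (n.choose 2 : ℝ) ^ 2 / (2 * n : ℝ) ^ (4 / p) := by
        rw [← Real.rpow_natCast_mul (by positivity), one_div, Real.inv_rpow (by positivity)]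
        push_cast
        ring_nf

theorem polyForm_crossEdges_const (n : ℕ) (p : ℝ) :
    polyForm 4 (crossEdges n) (fun _ => 1) (fun _ => (2 * n : ℝ) ^ (-1 / p))
      = 24 * (n.choose 2 : ℝ) ^ 2 / (2 * n : ℝ) ^ (4 / p) := by
  have hpow : ((2 * n : ℝ) ^ (-1 / p)) ^ 4 = ((2 * n : ℝ) ^ (4 / p))⁻¹ := by
    rw [← Real.rpow_mul_natCast (by positivity), ← Real.rpow_neg (by positivity)]
    ring_nf
  rw [polyForm_crossEdges, esymm2_const, card_univ, Fintype.card_fin, div_eq_mul_inv _ (_ ^ _),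
    ← hpow]
  ring

theorem lamMax_crossEdges_general (n : ℕ) (h2 : 2 ≤ n) (p : ℝ) (hp : 2 ≤ p) :
    lamMax 4 p (crossEdges n) (fun _ => 1) =
      24 * ((n : ℝ) * ((n : ℝ) - 1) / 2) ^ 2 / (2 * (n : ℝ)) ^ ((4 : ℝ) / p) := by
  have hn : 1 ≤ n := by omega
  have : Nonempty (Fin n) := ⟨⟨0, hn⟩⟩
  have hcard : (Fintype.card (Fin n ⊕ Fin n) : ℝ) = 2 * n := by
    rw [Fintype.card_sum, Fintype.card_fin]
    push_cast
    ring
  have hnorm := lpNorm_const_eq_one (V := Fin n ⊕ Fin n) (p := p) (by positivity)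
  rw [hcard] at hnorm
  rw [← Nat.cast_choose_two]
  refine IsGreatest.csSup_eq ⟨⟨_, hnorm, polyForm_crossEdges_const n p⟩, ?_⟩
  rintro _ ⟨x, hx, rfl⟩
  exact polyForm_crossEdges_le hn (by linarith) hx

/-- Equation (12) of the paper: for even `n ≥ 2` and real `p ≥ 2`, the `4`-graph `G`
of Section 2 satisfies `λ^(p)(G) = 4!·C(n,2)²/(2n)^{4/p}`. -/
theorem lamMax_crossEdges (n : ℕ) (hn : Even n) (h2 : 2 ≤ n) (p : ℝ) (hp : 2 ≤ p) :
    lamMax 4 p (crossEdges n) (fun _ => 1) =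
      24 * ((n : ℝ) * ((n : ℝ) - 1) / 2) ^ 2 / (2 * (n : ℝ)) ^ ((4 : ℝ) / p) :=
  lamMax_crossEdges_general n h2 p hp
end
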